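/- arXiv:1210.1741 — 3 statements merged into one kernel-verified Lean document; each statement's English description precedes it below -/
import Mathlib

section
/- If (𝒞, 𝒦) is a connective island domain and 𝒮 is a system of pre-islands corresponding to (𝒞, 𝒦), then |𝒮| ≤ |U|. -/
/-! If a pre-island `S` meets `T ∈ 𝒞` and `T ⊄ S`, connectivity gives a cover of `S` inside
`S ∪ T`, whose minimum lies below all of `S` and hence in `T`. So two incomparable meeting
pre-islands would each dip below the other, and a pre-island `S` covered by a union of pre-islands
lies inside the one containing the minimum point of `S`: a system of pre-islands is
CDW-independent. In a CDW-independent family of nonempty sets, each member keeps a nonempty private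
part outside the members strictly below it, and these parts are pairwise disjoint. -/

open Finset

variable {U : Type*}

/-- `K` covers `S` in the poset `(𝒦, ⊆)`. -/
def Covers (𝒦 : Finset (Finset U)) (S K : Finset U) : Prop :=
  S ⊂ K ∧ ∀ K' ∈ 𝒦, S ⊂ K' → ¬K' ⊂ K

/-- `min h(K) < min h(S)` (for nonempty finite `S`, `K`). -/
def MinLt (h : U → ℝ) (K S : Finset U) : Prop :=
  ∃ k ∈ K, ∀ s ∈ S, h k < h s

/-- `S` is a pre-island with respect to `(𝒞, 𝒦, h)`. -/
def IsPreIsland (𝒞 𝒦 : Finset (Finset U)) (h : U → ℝ) (S : Finset U) : Prop :=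
  S ∈ 𝒞 ∧ S.Nonempty ∧ ∀ K ∈ 𝒦, Covers 𝒦 S K → MinLt h K S

/-- `S` is an island with respect to `(𝒞, 𝒦, h)`. -/
def IsIsland [DecidableEq U] (𝒞 𝒦 : Finset (Finset U)) (h : U → ℝ) (S : Finset U) : Prop :=
  S ∈ 𝒞 ∧ S.Nonempty ∧ ∀ K ∈ 𝒦, Covers 𝒦 S K → ∀ u ∈ K \ S, ∀ s ∈ S, h u < h s

/-- `(𝒞, 𝒦)` is an island domain on `U`. -/
def IslandDomain [Fintype U] (𝒞 𝒦 : Finset (Finset U)) : Prop :=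
  𝒞 ⊆ 𝒦 ∧ Finset.univ ∈ 𝒞

/-- `ℋ` is admissible with respect to `(𝒞, 𝒦)`. -/
def Admissible [DecidableEq U] [Fintype U] (𝒞 𝒦 ℋ : Finset (Finset U)) : Prop :=
  ℋ ⊆ 𝒞 ∧ (∅ : Finset U) ∉ ℋ ∧ Finset.univ ∈ ℋ ∧
    ∀ 𝒜 ⊆ ℋ, 𝒜.Nonempty → (∀ A ∈ 𝒜, ∀ B ∈ 𝒜, A ⊆ B → A = B) →
      ∃ H ∈ 𝒜, ∀ K ∈ 𝒦, H ⊂ K → ¬K ⊆ 𝒜.sup id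

/-- `𝒮` is the system of pre-islands corresponding to `(𝒞, 𝒦, h)` for some `h`. -/
def IsSystemOfPreIslands (𝒞 𝒦 𝒮 : Finset (Finset U)) : Prop :=
  ∃ h : U → ℝ, ∀ S, S ∈ 𝒮 ↔ IsPreIsland 𝒞 𝒦 h S

/-- `𝒮` is the system of islands corresponding to `(𝒞, 𝒦, h)` for some `h`. -/
def IsSystemOfIslands [DecidableEq U] (𝒞 𝒦 𝒮 : Finset (Finset U)) : Prop :=
  ∃ h : U → ℝ, ∀ S, S ∈ 𝒮 ↔ IsIsland 𝒞 𝒦 h S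

/-- `(𝒞, 𝒦)` is a connective island domain. -/
def Connective [DecidableEq U] (𝒞 𝒦 : Finset (Finset U)) : Prop :=
  ∀ A ∈ 𝒞, ∀ B ∈ 𝒞, (A ∩ B).Nonempty → ¬B ⊆ A → ∃ K ∈ 𝒦, A ⊂ K ∧ K ⊆ A ∪ B

/-- Any two members are comparable or disjoint. -/
def CDIndependent [DecidableEq U] (ℋ : Finset (Finset U)) : Prop :=
  ∀ A ∈ ℋ, ∀ B ∈ ℋ, A ⊆ B ∨ B ⊆ A ∨ A ∩ B = ∅

def WeaklyIndependent [DecidableEq U] (ℋ : Finset (Finset U)) : Prop :=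
  ∀ H ∈ ℋ, ∀ 𝒢 ⊆ ℋ, 𝒢.Nonempty → H ⊆ 𝒢.sup id → ∃ G ∈ 𝒢, H ⊆ G

def CDWIndependent [DecidableEq U] (ℋ : Finset (Finset U)) : Prop :=
  CDIndependent ℋ ∧ WeaklyIndependent ℋ

/-- The proximity relation `δ`: `A δ B` iff some `K ∈ 𝒦` with `A ⪯ K` meets `B`. -/
def Delta [DecidableEq U] (𝒦 : Finset (Finset U)) (A B : Finset U) : Prop :=
  ∃ K ∈ 𝒦, (K = A ∨ Covers 𝒦 A K) ∧ (K ∩ B).Nonempty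

def Distant [DecidableEq U] (𝒦 : Finset (Finset U)) (A B : Finset U) : Prop :=
  ¬Delta 𝒦 A B ∧ ¬Delta 𝒦 B A

/-- Any two incomparable members of `ℋ` are distant. -/
def DistantFamily [DecidableEq U] (𝒦 ℋ : Finset (Finset U)) : Prop :=
  ∀ A ∈ ℋ, ∀ B ∈ ℋ, ¬A ⊆ B → ¬B ⊆ A → Distant 𝒦 A B

/-- A proximity domain: connective and `δ` symmetric on nonempty members of `𝒞`. -/
def ProximityDomain [DecidableEq U] (𝒞 𝒦 : Finset (Finset U)) : Prop :=
  Connective 𝒞 𝒦 ∧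
    ∀ A ∈ 𝒞, ∀ B ∈ 𝒞, A.Nonempty → B.Nonempty → (Delta 𝒦 A B ↔ Delta 𝒦 B A)

section Independence

variable [DecidableEq U]

def privatePart (ℋ : Finset (Finset U)) (H : Finset U) : Finset U :=
  H \ {G ∈ ℋ | G ⊂ H}.sup id

lemma privatePart_subset (ℋ : Finset (Finset U)) (H : Finset U) : privatePart ℋ H ⊆ H :=
  sdiff_subset

lemma WeaklyIndependent.privatePart_nonempty {ℋ : Finset (Finset U)} (hw : WeaklyIndependent ℋ)
    {H : Finset U} (hH : H ∈ ℋ) (hne : H.Nonempty) : (privatePart ℋ H).Nonempty := by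
  rw [privatePart, sdiff_nonempty]
  intro hsub
  rcases ({G ∈ ℋ | G ⊂ H} : Finset (Finset U)).eq_empty_or_nonempty with hempty | h𝒢
  · rw [hempty, sup_empty] at hsub
    exact hne.ne_empty (subset_empty.mp hsub)
  · obtain ⟨G, hG, hHG⟩ := hw H hH _ (filter_subset _ _) h𝒢 hsub
    exact (mem_filter.mp hG).2.not_subset hHG

lemma disjoint_privatePart_of_ssubset {ℋ : Finset (Finset U)} {H H' : Finset U} (hH : H ∈ ℋ)
    (hHH' : H ⊂ H') : Disjoint (privatePart ℋ H) (privatePart ℋ H') := by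
  have hH_le : H ⊆ {G ∈ ℋ | G ⊂ H'}.sup id :=
    le_sup (f := id) (mem_filter.mpr ⟨hH, hHH'⟩)
  exact (disjoint_sdiff.mono_left hH_le).mono_left (privatePart_subset ℋ H)

lemma CDIndependent.pairwiseDisjoint_privatePart {ℋ : Finset (Finset U)}
    (hcd : CDIndependent ℋ) : (ℋ : Set (Finset U)).PairwiseDisjoint (privatePart ℋ) := by
  intro H hH H' hH' hne
  rcases hcd H hH H' hH' with hsub | hsub | hinter
  · exact disjoint_privatePart_of_ssubset hH (ssubset_of_subset_of_ne hsub hne)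
  · exact (disjoint_privatePart_of_ssubset hH' (ssubset_of_subset_of_ne hsub hne.symm)).symm
  · exact (disjoint_iff_inter_eq_empty.mpr hinter).mono
      (privatePart_subset ℋ H) (privatePart_subset ℋ H')

theorem CDWIndependent.card_le_card_sup {ℋ : Finset (Finset U)} (hℋ : CDWIndependent ℋ)
    (hne : ∀ H ∈ ℋ, H.Nonempty) : #ℋ ≤ #(ℋ.sup id) :=
  calc #ℋ ≤ #(ℋ.biUnion (privatePart ℋ)) :=
        card_le_card_biUnion hℋ.1.pairwiseDisjoint_privatePart
          fun H hH => hℋ.2.privatePart_nonempty hH (hne H hH)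
    _ ≤ #(ℋ.sup id) := card_le_card <| biUnion_subset.mpr fun H hH =>
        (privatePart_subset ℋ H).trans (le_sup (f := id) hH)

end Independence

lemma exists_covers_subset (𝒦 : Finset (Finset U)) {S K W : Finset U} (hK : K ∈ 𝒦)
    (hSK : S ⊂ K) (hKW : K ⊆ W) : ∃ K' ∈ 𝒦, Covers 𝒦 S K' ∧ K' ⊆ W := by
  classical
  obtain ⟨K', hK', hmin⟩ := ({K ∈ 𝒦 | S ⊂ K ∧ K ⊆ W} : Finset (Finset U)).exists_minimal
    ⟨K, mem_filter.mpr ⟨hK, hSK, hKW⟩⟩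
  obtain ⟨hK'𝒦, hSK', hK'W⟩ := mem_filter.mp hK'
  refine ⟨K', hK'𝒦, ⟨hSK', fun L hL hSL hLK' => ?_⟩, hK'W⟩
  exact hLK'.not_subset (hmin (mem_filter.mpr ⟨hL, hSL, hLK'.subset.trans hK'W⟩) hLK'.subset)

lemma MinLt.asymm {h : U → ℝ} {K S : Finset U} (hKS : MinLt h K S) : ¬MinLt h S K := by
  rintro ⟨s, hs, hsK⟩
  obtain ⟨k, hk, hkS⟩ := hKS
  exact (hkS s hs).asymm (hsK k hk)

section PreIslands

variable [DecidableEq U] {𝒞 𝒦 𝒮 : Finset (Finset U)} {h : U → ℝ}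

lemma IsPreIsland.minLt_of_not_subset {S T : Finset U} (hconn : Connective 𝒞 𝒦)
    (hS : IsPreIsland 𝒞 𝒦 h S) (hT : T ∈ 𝒞) (hST : (S ∩ T).Nonempty) (hTS : ¬T ⊆ S) :
    MinLt h T S := by
  obtain ⟨hS𝒞, -, hcov⟩ := hS
  obtain ⟨K, hK, hSK, hKST⟩ := hconn S hS𝒞 T hT hST hTS
  obtain ⟨K', hK', hSK', hK'ST⟩ := exists_covers_subset 𝒦 hK hSK hKST
  obtain ⟨k, hkK', hkS⟩ := hcov K' hK' hSK'
  have hk_notMem : k ∉ S := fun hk => (hkS k hk).false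
  exact ⟨k, (mem_union.mp (hK'ST hkK')).resolve_left hk_notMem, hkS⟩

lemma cdIndependent_of_isPreIsland (hconn : Connective 𝒞 𝒦)
    (h𝒮 : ∀ S ∈ 𝒮, IsPreIsland 𝒞 𝒦 h S) : CDIndependent 𝒮 := by
  intro A hA B hB
  by_contra! hcon
  obtain ⟨hAB, hBA, hAB_ne⟩ := hcon
  have hBA_ne : (B ∩ A).Nonempty := inter_comm A B ▸ hAB_ne
  exact (h𝒮 A hA).minLt_of_not_subset hconn (h𝒮 B hB).1 hAB_ne hBA |>.asymm <|
    (h𝒮 B hB).minLt_of_not_subset hconn (h𝒮 A hA).1 hBA_ne hAB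

lemma weaklyIndependent_of_isPreIsland (hconn : Connective 𝒞 𝒦)
    (h𝒮 : ∀ S ∈ 𝒮, IsPreIsland 𝒞 𝒦 h S) : WeaklyIndependent 𝒮 := by
  intro S hS 𝒢 h𝒢 _ hS𝒢
  obtain ⟨s₀, hs₀, hs₀_min⟩ := S.exists_min_image h (h𝒮 S hS).2.1
  obtain ⟨G, hG, hs₀G⟩ := mem_sup.mp (hS𝒢 hs₀)
  refine ⟨G, hG, ?_⟩
  by_contra hSG
  obtain ⟨k, hkS, hk⟩ := (h𝒮 G (h𝒢 hG)).minLt_of_not_subset hconn (h𝒮 S hS).1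
    ⟨s₀, mem_inter.mpr ⟨hs₀G, hs₀⟩⟩ hSG
  exact (hk s₀ hs₀G).not_ge (hs₀_min k hkS)

end PreIslands

theorem system_card_le_general [Fintype U] [DecidableEq U]
    (𝒞 𝒦 𝒮 : Finset (Finset U))
    (hconn : Connective 𝒞 𝒦) (h𝒮 : IsSystemOfPreIslands 𝒞 𝒦 𝒮) :
    𝒮.card ≤ Fintype.card U := by
  obtain ⟨h, hh⟩ := h𝒮
  have hpre : ∀ S ∈ 𝒮, IsPreIsland 𝒞 𝒦 h S := fun S hS => (hh S).mp hS
  have hcdw : CDWIndependent 𝒮 :=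
    ⟨cdIndependent_of_isPreIsland hconn hpre, weaklyIndependent_of_isPreIsland hconn hpre⟩
  calc 𝒮.card ≤ #(𝒮.sup id) := hcdw.card_le_card_sup fun S hS => (hpre S hS).2.1
    _ ≤ Fintype.card U := card_le_univ _

/-- in a connective island domain, a system of pre-islands has at most `|U|` members. -/
theorem system_card_le [Fintype U] [DecidableEq U] [Nonempty U]
    (𝒞 𝒦 𝒮 : Finset (Finset U)) (hdom : IslandDomain 𝒞 𝒦)
    (hconn : Connective 𝒞 𝒦) (h𝒮 : IsSystemOfPreIslands 𝒞 𝒦 𝒮) :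
    𝒮.card ≤ Fintype.card U :=
  system_card_le_general 𝒞 𝒦 𝒮 hconn h𝒮
end

section
/- If ℋ ⊆ 𝒞 is a distant family, then ℋ is CDW-independent; moreover, if U ∈ ℋ, then ℋ is admissible. -/
open Finset

variable {U : Type*}

/-! Two incomparable members `A`, `B` of a distant family cannot satisfy `A δ B`. Hence members that
meet are comparable (CD-independence), and whenever a cover of `A` reaches a point of `B` outside `A`,
we get `A ⊆ B`. Weak independence and admissibility both follow by taking a cover of a suitable
member inside the union and applying this to the member containing the new point. -/

theorem exists_covers_subset_of_ssubset {𝒦 : Finset (Finset U)} {G K₀ S : Finset U}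
    (hK₀ : K₀ ∈ 𝒦) (hGK₀ : G ⊂ K₀) (hK₀S : K₀ ⊆ S) :
    ∃ K ∈ 𝒦, Covers 𝒦 G K ∧ K ⊆ S := by
  obtain ⟨K, -, ⟨hK, hGK, hKS⟩, hmin⟩ :=
    exists_minimal_le_of_wellFoundedLT (fun K => K ∈ 𝒦 ∧ G ⊂ K ∧ K ⊆ S) K₀ ⟨hK₀, hGK₀, hK₀S⟩
  refine ⟨K, hK, ⟨hGK, fun K' hK' hGK' hK'K => ?_⟩, hKS⟩
  exact hK'K.not_subset (hmin ⟨hK', hGK', hK'K.subset.trans hKS⟩ hK'K.subset)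

namespace DistantFamily

variable [DecidableEq U] {𝒦 ℋ : Finset (Finset U)} {A B : Finset U}

theorem subset_or_subset_of_delta (hdist : DistantFamily 𝒦 ℋ) (hA : A ∈ ℋ) (hB : B ∈ ℋ)
    (hAB : Delta 𝒦 A B) : A ⊆ B ∨ B ⊆ A := by
  by_contra! h
  exact (hdist A hA B hB h.1 h.2).1 hAB

theorem subset_or_subset_of_inter_nonempty (hdist : DistantFamily 𝒦 ℋ) (hA : A ∈ ℋ)
    (hB : B ∈ ℋ) (hA𝒦 : A ∈ 𝒦) (hAB : (A ∩ B).Nonempty) : A ⊆ B ∨ B ⊆ A :=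
  hdist.subset_or_subset_of_delta hA hB ⟨A, hA𝒦, Or.inl rfl, hAB⟩

theorem subset_of_covers (hdist : DistantFamily 𝒦 ℋ) (hA : A ∈ ℋ) (hB : B ∈ ℋ)
    {K : Finset U} (hK : K ∈ 𝒦) (hAK : Covers 𝒦 A K) {y : U} (hyK : y ∈ K) (hyB : y ∈ B)
    (hyA : y ∉ A) : A ⊆ B :=
  (hdist.subset_or_subset_of_delta hA hB ⟨K, hK, Or.inr hAK, y, mem_inter.2 ⟨hyK, hyB⟩⟩)
    |>.resolve_right fun hBA => hyA (hBA hyB)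

theorem cdIndependent (hdist : DistantFamily 𝒦 ℋ) (hℋ𝒦 : ℋ ⊆ 𝒦) : CDIndependent ℋ := by
  intro A hA B hB
  rcases (A ∩ B).eq_empty_or_nonempty with hAB | hAB
  · exact Or.inr (Or.inr hAB)
  · exact (hdist.subset_or_subset_of_inter_nonempty hA hB (hℋ𝒦 hA) hAB).imp_right Or.inl

theorem weaklyIndependent (hdist : DistantFamily 𝒦 ℋ) (hℋ𝒦 : ℋ ⊆ 𝒦)
    (hne : (∅ : Finset U) ∉ ℋ) : WeaklyIndependent ℋ := by
  intro H hH 𝒢 h𝒢ℋ _ hH𝒢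
  by_contra! hH𝒢'
  have hsubset : ∀ {G y}, G ∈ 𝒢 → y ∈ G → y ∈ H → G ⊆ H := fun hG hyG hyH =>
    ((hdist.subset_or_subset_of_inter_nonempty (h𝒢ℋ hG) hH (hℋ𝒦 (h𝒢ℋ hG))
      ⟨_, mem_inter.2 ⟨hyG, hyH⟩⟩).resolve_right (hH𝒢' _ hG))
  obtain ⟨x, hxH⟩ := nonempty_iff_ne_empty.2 fun h => hne (h ▸ hH)
  obtain ⟨G₀, hG₀, hxG₀⟩ := mem_sup.1 (hH𝒢 hxH)
  -- a maximal member of `𝒢` inside `H`; its cover inside `H` leads to a larger one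
  obtain ⟨G₁, -, hG₁mem, hG₁max⟩ :=
    {G ∈ 𝒢 | G ⊆ H}.exists_le_maximal (mem_filter.2 ⟨hG₀, hsubset hG₀ hxG₀ hxH⟩)
  obtain ⟨hG₁, hG₁H⟩ := mem_filter.1 hG₁mem
  obtain ⟨K, hK, hG₁K, hKH⟩ := exists_covers_subset_of_ssubset (hℋ𝒦 hH)
    (hG₁H.ssubset_of_not_subset (hH𝒢' G₁ hG₁)) subset_rfl
  obtain ⟨y, hyK, hyG₁⟩ := exists_of_ssubset hG₁K.1
  obtain ⟨G₂, hG₂, hyG₂⟩ := mem_sup.1 (hH𝒢 (hKH hyK))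
  have hG₁G₂ : G₁ ⊆ G₂ := hdist.subset_of_covers (h𝒢ℋ hG₁) (h𝒢ℋ hG₂) hK hG₁K hyK hyG₂ hyG₁
  exact hyG₁ (hG₁max (mem_filter.2 ⟨hG₂, hsubset hG₂ hyG₂ (hKH hyK)⟩) hG₁G₂ hyG₂)

theorem not_ssubset_subset_sup_of_isAntichain (hdist : DistantFamily 𝒦 ℋ) {𝒜 : Finset (Finset U)}
    (h𝒜ℋ : 𝒜 ⊆ ℋ) (hanti : ∀ A ∈ 𝒜, ∀ B ∈ 𝒜, A ⊆ B → A = B) (hA : A ∈ 𝒜) {K : Finset U}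
    (hK : K ∈ 𝒦) (hAK : A ⊂ K) : ¬K ⊆ 𝒜.sup id := by
  intro hK𝒜
  obtain ⟨K₁, hK₁, hAK₁, hK₁𝒜⟩ := exists_covers_subset_of_ssubset hK hAK hK𝒜
  obtain ⟨y, hyK₁, hyA⟩ := exists_of_ssubset hAK₁.1
  obtain ⟨B, hB, hyB⟩ := mem_sup.1 (hK₁𝒜 hyK₁)
  have hAB := hdist.subset_of_covers (h𝒜ℋ hA) (h𝒜ℋ hB) hK₁ hAK₁ hyK₁ hyB hyA
  exact hyA (hanti A hA B hB hAB ▸ hyB)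

end DistantFamily

theorem distant_cdw_and_admissible_general [Fintype U] [DecidableEq U]
    (𝒞 𝒦 ℋ : Finset (Finset U)) (hdom : IslandDomain 𝒞 𝒦)
    (hsub : ℋ ⊆ 𝒞) (hne : (∅ : Finset U) ∉ ℋ) (hdist : DistantFamily 𝒦 ℋ) :
    CDWIndependent ℋ ∧ (Finset.univ ∈ ℋ → Admissible 𝒞 𝒦 ℋ) := by
  have hℋ𝒦 : ℋ ⊆ 𝒦 := hsub.trans hdom.1
  refine ⟨⟨hdist.cdIndependent hℋ𝒦, hdist.weaklyIndependent hℋ𝒦 hne⟩,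
    fun huniv => ⟨hsub, hne, huniv, fun 𝒜 h𝒜ℋ ⟨A, hA⟩ hanti => ⟨A, hA, fun K hK hAK =>
      hdist.not_ssubset_subset_sup_of_isAntichain h𝒜ℋ hanti hA hK hAK⟩⟩⟩

/-- a distant family is CDW-independent, and admissible if it contains `U`. -/
theorem distant_cdw_and_admissible [Fintype U] [DecidableEq U] [Nonempty U]
    (𝒞 𝒦 ℋ : Finset (Finset U)) (hdom : IslandDomain 𝒞 𝒦)
    (hsub : ℋ ⊆ 𝒞) (hne : (∅ : Finset U) ∉ ℋ) (hdist : DistantFamily 𝒦 ℋ) :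
    CDWIndependent ℋ ∧ (Finset.univ ∈ ℋ → Admissible 𝒞 𝒦 ℋ) :=
  distant_cdw_and_admissible_general 𝒞 𝒦 ℋ hdom hsub hne hdist
end

section
/- If (𝒞, 𝒦) is a proximity domain, then any system of islands corresponding to (𝒞, 𝒦) is a distant family. -/
open Finset

variable {U : Type*}

/-!
If incomparable islands `A`, `B` satisfied `A δ B`, some cover of `A` would reach into `B \ A`:
directly when `A` and `B` are disjoint, and through connectivity when they meet. Since `A` is an
island, that point of `B` lies below `min h(A)`. Symmetry of `δ` gives `B δ A` as well, hence a
point of `A` below `min h(B)`, and the two points contradict each other.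
-/

section Islands

variable [DecidableEq U] {𝒞 𝒦 : Finset (Finset U)} {h : U → ℝ} {A B : Finset U}

lemma exists_covers_subset_of_ssubset_s16 {K' : Finset U} (hK' : K' ∈ 𝒦) (hAK' : A ⊂ K') :
    ∃ K ∈ 𝒦, Covers 𝒦 A K ∧ K ⊆ K' := by
  have hne : (𝒦.filter fun K => A ⊂ K ∧ K ⊆ K').Nonempty := ⟨K', by simp [hK', hAK']⟩
  obtain ⟨K, hK, hmin⟩ := Finset.exists_minimal hne
  simp only [Finset.mem_filter] at hK
  refine ⟨K, hK.1, ⟨hK.2.1, fun K₁ hK₁ hAK₁ hK₁K => ?_⟩, hK.2.2⟩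
  exact hK₁K.2 (hmin (Finset.mem_filter.2 ⟨hK₁, hAK₁, hK₁K.subset.trans hK.2.2⟩) hK₁K.subset)

lemma Delta.exists_covers_mem_sdiff (hconn : Connective 𝒞 𝒦) (hA : A ∈ 𝒞) (hB : B ∈ 𝒞)
    (hBA : ¬B ⊆ A) (hd : Delta 𝒦 A B) :
    ∃ K ∈ 𝒦, Covers 𝒦 A K ∧ ∃ u ∈ K \ A, u ∈ B := by
  by_cases hAB : (A ∩ B).Nonempty
  · obtain ⟨K', hK', hAK', hK'AB⟩ := hconn A hA B hB hAB hBA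
    obtain ⟨K, hK, hcov, hKK'⟩ := exists_covers_subset_of_ssubset_s16 hK' hAK'
    obtain ⟨u, huK, huA⟩ := Finset.exists_of_ssubset hcov.1
    have huB : u ∈ B := (Finset.mem_union.1 (hK'AB (hKK' huK))).resolve_left huA
    exact ⟨K, hK, hcov, u, Finset.mem_sdiff.2 ⟨huK, huA⟩, huB⟩
  · obtain ⟨K, hK, rfl | hcov, u, hu⟩ := hd
    · exact absurd ⟨u, hu⟩ hAB
    · obtain ⟨huK, huB⟩ := Finset.mem_inter.1 hu
      have huA : u ∉ A := fun huA => hAB ⟨u, Finset.mem_inter.2 ⟨huA, huB⟩⟩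
      exact ⟨K, hK, hcov, u, Finset.mem_sdiff.2 ⟨huK, huA⟩, huB⟩

lemma IsIsland.exists_lt_of_delta (hconn : Connective 𝒞 𝒦) (hA : IsIsland 𝒞 𝒦 h A)
    (hB : B ∈ 𝒞) (hBA : ¬B ⊆ A) (hd : Delta 𝒦 A B) :
    ∃ u ∈ B, ∀ s ∈ A, h u < h s := by
  obtain ⟨K, hK, hcov, u, huKA, huB⟩ := hd.exists_covers_mem_sdiff hconn hA.1 hB hBA
  exact ⟨u, huB, hA.2.2 K hK hcov u huKA⟩

lemma IsIsland.not_delta (hprox : ProximityDomain 𝒞 𝒦) (hA : IsIsland 𝒞 𝒦 h A)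
    (hB : IsIsland 𝒞 𝒦 h B) (hAB : ¬A ⊆ B) (hBA : ¬B ⊆ A) : ¬Delta 𝒦 A B := by
  intro hd
  have hd' : Delta 𝒦 B A := (hprox.2 A hA.1 B hB.1 hA.2.1 hB.2.1).1 hd
  obtain ⟨u, huB, hu⟩ := hA.exists_lt_of_delta hprox.1 hB.1 hBA hd
  obtain ⟨v, hvA, hv⟩ := hB.exists_lt_of_delta hprox.1 hA.1 hAB hd'
  exact lt_asymm (hu v hvA) (hv u huB)

end Islands

theorem systemOfIslands_distant_general [DecidableEq U]
    (𝒞 𝒦 𝒮 : Finset (Finset U))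
    (hprox : ProximityDomain 𝒞 𝒦) (h𝒮 : IsSystemOfIslands 𝒞 𝒦 𝒮) :
    DistantFamily 𝒦 𝒮 := by
  obtain ⟨h, hmem⟩ := h𝒮
  intro A hA B hB hAB hBA
  have hA' := (hmem A).1 hA
  have hB' := (hmem B).1 hB
  exact ⟨hA'.not_delta hprox hB' hAB hBA, hB'.not_delta hprox hA' hBA hAB⟩

/-- in a proximity domain every system of islands is a distant family. -/
theorem systemOfIslands_distant [Fintype U] [DecidableEq U] [Nonempty U]
    (𝒞 𝒦 𝒮 : Finset (Finset U)) (hdom : IslandDomain 𝒞 𝒦)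
    (hprox : ProximityDomain 𝒞 𝒦) (h𝒮 : IsSystemOfIslands 𝒞 𝒦 𝒮) :
    DistantFamily 𝒦 𝒮 :=
  systemOfIslands_distant_general 𝒞 𝒦 𝒮 hprox h𝒮
end
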